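/- arXiv:2012.08154 — 7 statements merged into one kernel-verified Lean document; each statement's English description precedes it below -/
import Mathlib

section
/- Define $h(W) = \mathrm{tr}(\exp(W \odot W)) - d$ for real $d \times d$ matrices $W$, where $\odot$ is the entrywise (Hadamard) product. Then the gradient of $h$ is given by $\nabla h(W) = 2\, W \odot (\exp(W \odot W))^\top$, i.e., $\frac{\partial h}{\partial W_{ij}} = 2 W_{ij} (\exp(W\odot W))_{ji}$. -/
/-!
Differentiating the exponential series term by term, the derivative of `τ (y ^ (n + 1))` in the
direction `h` is `∑ k, τ (y ^ k * h * y ^ (n - k)) = (n + 1) • τ (y ^ n * h)` for any trace-like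
functional `τ`, so the derivative of `τ ∘ exp` at `x` is `h ↦ τ (exp x * h)`, although `exp` itself
has no such simple derivative in a noncommutative algebra. The path
`t ↦ (W + t • E i j) ⊙ (W + t • E i j)` has velocity `(2 * W i j) • E i j` at `0`, and
`tr (exp (W ⊙ W) * E i j) = exp (W ⊙ W) j i`.
-/

open Matrix NormedSpace Nat
open scoped Matrix.Norms.Operator

section TraceExp

variable {𝕂 𝔸 F : Type*} [RCLike 𝕂] [NormedRing 𝔸] [NormedAlgebra 𝕂 𝔸]
  [NormedAddCommGroup F] [NormedSpace 𝕂 F]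

-- No `NormOneClass`: on `0 × 0` matrices `‖1‖ = 0`.
lemma norm_pow_le_max_norm_one_mul {R : Type*} [NormedRing R] (a : R) (n : ℕ) :
    ‖a ^ n‖ ≤ max ‖(1 : R)‖ 1 * ‖a‖ ^ n := by
  cases n with
  | zero => simp
  | succ n =>
    exact (norm_pow_le' a n.succ_pos).trans (le_mul_of_one_le_left (by positivity) (le_max_right _ _))

lemma norm_inv_factorial_smul_pow_le {y : 𝔸} {r : ℝ} (hy : ‖y‖ ≤ r) (n : ℕ) :
    ‖(n ! : 𝕂)⁻¹ • y ^ n‖ ≤ max ‖(1 : 𝔸)‖ 1 * (r ^ n / n !) := by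
  calc ‖(n ! : 𝕂)⁻¹ • y ^ n‖ = (n ! : ℝ)⁻¹ * ‖y ^ n‖ := by
        rw [norm_smul, norm_inv, RCLike.norm_natCast]
    _ ≤ (n ! : ℝ)⁻¹ * (max ‖(1 : 𝔸)‖ 1 * r ^ n) := by
        gcongr
        exact (norm_pow_le_max_norm_one_mul y n).trans (by gcongr)
    _ = max ‖(1 : 𝔸)‖ 1 * (r ^ n / n !) := by ring

lemma hasFDerivAt_trace_pow_succ (τ : 𝔸 →L[𝕂] F) (hτ : ∀ a b, τ (a * b) = τ (b * a))
    (n : ℕ) (x : 𝔸) :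
    HasFDerivAt (fun y => τ (y ^ (n + 1)))
      ((n + 1 : 𝕂) • τ.comp (ContinuousLinearMap.mul 𝕂 𝔸 (x ^ n))) x := by
  refine (τ.hasFDerivAt.comp x (hasFDerivAt_pow' (𝕜 := 𝕂) (n + 1))).congr_fderiv ?_
  ext h
  have hcyclic : ∀ k ∈ Finset.range (n + 1), τ (x ^ (n - k) * h * x ^ k) = τ (x ^ n * h) := by
    intro k hk
    rw [hτ, ← mul_assoc, ← pow_add, Nat.add_sub_cancel' (Finset.mem_range_succ_iff.mp hk)]
  simp only [ContinuousLinearMap.comp_apply, FunLike.coe_sum, Finset.sum_apply,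
    FunLike.coe_smul, Pi.smul_apply, ContinuousLinearMap.id_apply, op_smul_eq_mul,
    smul_eq_mul, Nat.pred_succ, ContinuousLinearMap.mul_apply']
  rw [map_sum, Finset.sum_congr rfl hcyclic, Finset.sum_const, Finset.card_range,
    ← Nat.cast_smul_eq_nsmul 𝕂, Nat.cast_succ]

lemma hasSum_map_exp_sub_map_one [CompleteSpace 𝔸] (τ : 𝔸 →L[𝕂] F) (x : 𝔸) :
    HasSum (fun n => ((n + 1)! : 𝕂)⁻¹ • τ (x ^ (n + 1))) (τ (exp x) - τ 1) := by
  have h := (exp_series_hasSum_exp' (𝕂 := 𝕂) x).mapL τ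
  simpa [map_smul] using (hasSum_nat_add_iff' 1).mpr h

theorem hasFDerivAt_trace_exp [CompleteSpace 𝔸] [CompleteSpace F] (τ : 𝔸 →L[𝕂] F)
    (hτ : ∀ a b, τ (a * b) = τ (b * a)) (x : 𝔸) :
    HasFDerivAt (fun y => τ (exp y)) (τ.comp (ContinuousLinearMap.mul 𝕂 𝔸 (exp x))) x := by
  set Φ : 𝔸 →L[𝕂] 𝔸 →L[𝕂] F := ContinuousLinearMap.compL 𝕂 𝔸 𝔸 F τ ∘L ContinuousLinearMap.mul 𝕂 𝔸
  have hderiv : ∀ n y, HasFDerivAt (fun y => ((n + 1)! : 𝕂)⁻¹ • τ (y ^ (n + 1)))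
      (Φ ((n ! : 𝕂)⁻¹ • y ^ n)) y := by
    intro n y
    refine ((hasFDerivAt_trace_pow_succ τ hτ n y).const_smul _).congr_fderiv ?_
    have hcoef : ((n + 1)! : 𝕂)⁻¹ * (n + 1) = (n ! : 𝕂)⁻¹ := by
      rw [Nat.factorial_succ]
      push_cast
      field_simp
    rw [map_smul, smul_smul, hcoef]
    rfl
  have hbound : ∀ n, ∀ y ∈ Metric.ball x 1,
      ‖Φ ((n ! : 𝕂)⁻¹ • y ^ n)‖ ≤ ‖Φ‖ * (max ‖(1 : 𝔸)‖ 1 * ((‖x‖ + 1) ^ n / n !)) :=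
    fun n y hy => (Φ.le_opNorm _).trans <| mul_le_mul_of_nonneg_left
      (norm_inv_factorial_smul_pow_le
        (norm_le_norm_add_const_of_dist_le (Metric.mem_ball.mp hy).le) n) (norm_nonneg _)
  have hsummable := ((Real.summable_pow_div_factorial (‖x‖ + 1)).mul_left (max ‖(1 : 𝔸)‖ 1)).mul_left ‖Φ‖
  have hball : IsPreconnected (Metric.ball x 1) :=
    letI : NormedSpace ℝ 𝔸 := .restrictScalars ℝ 𝕂 𝔸
    Metric.isPreconnected_ball
  have htsum := hasFDerivAt_tsum_of_isPreconnected hsummable Metric.isOpen_ball hball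
    (fun n y _ => hderiv n y) hbound (Metric.mem_ball_self one_pos)
    (hasSum_map_exp_sub_map_one τ x).summable (Metric.mem_ball_self one_pos)
  have hfun : (fun y => τ (exp y)) = fun y => τ 1 + ∑' n, ((n + 1)! : 𝕂)⁻¹ • τ (y ^ (n + 1)) := by
    funext y
    rw [(hasSum_map_exp_sub_map_one τ y).tsum_eq, add_sub_cancel]
  have hval : ∑' n, Φ ((n ! : 𝕂)⁻¹ • x ^ n) = τ.comp (ContinuousLinearMap.mul 𝕂 𝔸 (exp x)) :=
    ((exp_series_hasSum_exp' (𝕂 := 𝕂) x).mapL Φ).tsum_eq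
  rw [hfun, ← hval]
  exact htsum.const_add _

end TraceExp

section Hadamard

variable {m n α : Type*} [DecidableEq m] [DecidableEq n]

lemma hadamard_single [MulZeroClass α] (A : Matrix m n α) (i : m) (j : n) (a : α) :
    A ⊙ single i j a = single i j (A i j * a) := by
  ext k l
  by_cases h : i = k ∧ j = l
  · obtain ⟨rfl, rfl⟩ := h
    simp
  · simp [h]

lemma single_hadamard [MulZeroClass α] (A : Matrix m n α) (i : m) (j : n) (a : α) :
    single i j a ⊙ A = single i j (a * A i j) := by
  ext k l
  by_cases h : i = k ∧ j = l
  · obtain ⟨rfl, rfl⟩ := h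
    simp
  · simp [h]

end Hadamard

lemma hasDerivAt_hadamard_self_add_smul {m n 𝕜 : Type*} [Fintype m] [Fintype n]
    [NontriviallyNormedField 𝕜] (A B : Matrix m n 𝕜) :
    HasDerivAt (fun t : 𝕜 => (A + t • B) ⊙ (A + t • B)) (A ⊙ B + B ⊙ A) 0 := by
  have hexpand : (fun t : 𝕜 => (A + t • B) ⊙ (A + t • B))
      = fun t => A ⊙ A + t • (A ⊙ B + B ⊙ A) + t ^ 2 • (B ⊙ B) := by
    funext t
    simp only [add_hadamard, hadamard_add, smul_hadamard, hadamard_smul, smul_smul, smul_add]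
    module
  rw [hexpand]
  refine ((((hasDerivAt_id (0 : 𝕜)).smul_const (A ⊙ B + B ⊙ A)).const_add (A ⊙ A)).fun_add
    ((hasDerivAt_pow 2 (0 : 𝕜)).smul_const (B ⊙ B))).congr_deriv ?_
  simp

theorem stmt_3 (d : ℕ) (W : Matrix (Fin d) (Fin d) ℝ) (i j : Fin d) :
    HasDerivAt (fun t : ℝ =>
        (NormedSpace.exp
          ((W + t • Matrix.single i j (1 : ℝ)) ⊙
            (W + t • Matrix.single i j (1 : ℝ)))).trace - (d : ℝ))
      (2 * W i j * NormedSpace.exp (W ⊙ W) j i) 0 := by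
  set τ := (traceLinearMap (Fin d) ℝ ℝ).toContinuousLinearMap
  have hexp := hasFDerivAt_trace_exp τ trace_mul_comm (W ⊙ W)
  have hpath := hasDerivAt_hadamard_self_add_smul W (single i j (1 : ℝ))
  refine ((hexp.comp_hasDerivAt_of_eq 0 hpath (by simp)).sub_const (d : ℝ)).congr_deriv ?_
  change trace (exp (W ⊙ W) * (W ⊙ single i j 1 + single i j 1 ⊙ W)) = 2 * W i j * exp (W ⊙ W) j i
  rw [hadamard_single, single_hadamard, ← single_add, trace_mul_single]
  simp
  ring
end

section
/- For any real $d \times d$ matrix $W$, $h(W) = \mathrm{tr}(\exp(W \odot W)) - d \geq 0$, with equality if and only if the directed graph with adjacency structure given by the nonzero entries of $W$ is acyclic. -/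
/-!
Put `A = W ⊙ W`, an entrywise nonnegative matrix with the same zero pattern as `W`. Expanding the
exponential, `tr (exp A) - d = ∑_{n ≥ 1} tr (A ^ n) / n!`, a series of nonnegative terms. For a
nonnegative matrix, `(A ^ n) i j ≠ 0` exactly when there is a walk of length `n` from `i` to `j`
along nonzero entries, so `tr (A ^ n) ≠ 0` exactly when there is a closed walk of length `n`.
Hence the series vanishes iff the graph has no cycle.
-/

open Matrix

theorem exists_chain_succ_iff {ι : Type*} (r : ι → ι → Prop) (n : ℕ) (i j : ι) :
    (∃ f : ℕ → ι, f 0 = i ∧ f (n + 1) = j ∧ ∀ k < n + 1, r (f k) (f (k + 1))) ↔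
      ∃ z, (∃ f : ℕ → ι, f 0 = i ∧ f n = z ∧ ∀ k < n, r (f k) (f (k + 1))) ∧
        r z j := by
  constructor
  · rintro ⟨f, hf0, hfj, hr⟩
    exact ⟨f n, ⟨f, hf0, rfl, fun k hk => hr k (by omega)⟩, hfj ▸ hr n n.lt_succ_self⟩
  · rintro ⟨z, ⟨f, hf0, hfz, hr⟩, hzj⟩
    refine ⟨fun k => if k ≤ n then f k else j, by simpa using hf0, by simp, fun k hk => ?_⟩
    rcases Nat.lt_succ_iff_lt_or_eq.mp hk with hk | rfl
    · simpa [hk.le, Nat.succ_le_of_lt hk] using hr k hk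
    · simpa [hfz] using hzj

namespace Matrix

section OrderedSemiring

variable {ι R : Type*} [Fintype ι] [DecidableEq ι]
  [Semiring R] [PartialOrder R] [IsOrderedRing R] {A : Matrix ι ι R}

theorem trace_pow_nonneg (hA : ∀ i j, 0 ≤ A i j) (n : ℕ) : 0 ≤ (A ^ n).trace :=
  Finset.sum_nonneg fun i _ => pow_apply_nonneg hA n i i

variable [NoZeroDivisors R] [Nontrivial R]

theorem pow_apply_ne_zero_iff_exists_walk (hA : ∀ i j, 0 ≤ A i j) (n : ℕ) (i j : ι) :
    (A ^ n) i j ≠ 0 ↔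
      ∃ f : ℕ → ι, f 0 = i ∧ f n = j ∧ ∀ k < n, A (f k) (f (k + 1)) ≠ 0 := by
  induction n generalizing j with
  | zero =>
    simp only [pow_zero, one_apply, ne_eq, ite_eq_right_iff, one_ne_zero, imp_false, not_not]
    exact ⟨fun h => ⟨fun _ => i, rfl, h, nofun⟩, fun ⟨f, hf0, hfj, _⟩ => hf0 ▸ hfj⟩
  | succ n ih =>
    have hterm : ∀ z ∈ Finset.univ, 0 ≤ (A ^ n) i z * A z j :=
      fun z _ => mul_nonneg (pow_apply_nonneg hA n i z) (hA z j)
    rw [pow_succ, mul_apply, Ne, Finset.sum_eq_zero_iff_of_nonneg hterm]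
    simp only [Finset.mem_univ, true_implies, not_forall, mul_ne_zero_iff, ih]
    exact (exists_chain_succ_iff (fun a b => A a b ≠ 0) n i j).symm

theorem trace_pow_ne_zero_iff_exists_closed_walk (hA : ∀ i j, 0 ≤ A i j) (n : ℕ) :
    (A ^ n).trace ≠ 0 ↔
      ∃ f : ℕ → ι, f n = f 0 ∧ ∀ k < n, A (f k) (f (k + 1)) ≠ 0 := by
  rw [trace, Ne, Finset.sum_eq_zero_iff_of_nonneg (f := (A ^ n).diag)
    fun i _ => pow_apply_nonneg hA n i i]
  simp only [Finset.mem_univ, true_implies, not_forall, diag_apply,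
    pow_apply_ne_zero_iff_exists_walk hA]
  exact ⟨fun ⟨_, f, hf0, hfn, hf⟩ => ⟨f, hfn.trans hf0.symm, hf⟩,
    fun ⟨f, hfn, hf⟩ => ⟨f 0, f, rfl, hfn, hf⟩⟩

end OrderedSemiring

open scoped Nat

section RCLike

variable {ι 𝕂 : Type*} [Fintype ι] [DecidableEq ι] [RCLike 𝕂]

theorem hasSum_trace_exp (A : Matrix ι ι 𝕂) :
    HasSum (fun n => (n !⁻¹ : 𝕂) * (A ^ n).trace) (NormedSpace.exp A).trace := by
  -- The series lemma needs some normed-algebra structure; the operator norm supplies one.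
  have hexp : HasSum (fun n => (n !⁻¹ : 𝕂) • A ^ n) (NormedSpace.exp A) :=
    open scoped Norms.Operator in NormedSpace.exp_series_hasSum_exp' A
  simpa only [Function.comp_def, traceAddMonoidHom, AddMonoidHom.coe_mk, ZeroHom.coe_mk,
    trace_smul, smul_eq_mul] using
    hexp.map (traceAddMonoidHom ι 𝕂) continuous_id.matrix_trace

theorem hasSum_trace_exp_sub_card (A : Matrix ι ι 𝕂) :
    HasSum (fun n => ((n + 1)!⁻¹ : 𝕂) * (A ^ (n + 1)).trace)
      ((NormedSpace.exp A).trace - Fintype.card ι) := by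
  simpa using (hasSum_nat_add_iff' 1).mpr (hasSum_trace_exp A)

end RCLike

section Real

variable {ι : Type*} [Fintype ι] [DecidableEq ι] {A : Matrix ι ι ℝ}

theorem trace_exp_sub_card_nonneg (hA : ∀ i j, 0 ≤ A i j) :
    0 ≤ (NormedSpace.exp A).trace - Fintype.card ι :=
  (hasSum_trace_exp_sub_card A).nonneg fun _ =>
    mul_nonneg (by positivity) (trace_pow_nonneg hA _)

theorem trace_exp_sub_card_eq_zero_iff (hA : ∀ i j, 0 ≤ A i j) :
    (NormedSpace.exp A).trace - Fintype.card ι = 0 ↔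
      ¬ ∃ (K : ℕ) (f : ℕ → ι), 1 ≤ K ∧ f K = f 0 ∧
        ∀ k < K, A (f k) (f (k + 1)) ≠ 0 := by
  have hsum := hasSum_trace_exp_sub_card A
  calc (NormedSpace.exp A).trace - Fintype.card ι = 0
      ↔ HasSum (fun n => ((n + 1)!⁻¹ : ℝ) * (A ^ (n + 1)).trace) 0 :=
        ⟨fun h => h ▸ hsum, hsum.unique⟩
    _ ↔ ∀ n, (A ^ (n + 1)).trace = 0 := by
        rw [hasSum_zero_iff_of_nonneg fun n => mul_nonneg (by positivity) (trace_pow_nonneg hA _)]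
        simp [funext_iff, Nat.factorial_ne_zero]
    _ ↔ _ := by
        simp only [← not_ne_iff (b := (0 : ℝ)), trace_pow_ne_zero_iff_exists_closed_walk hA]
        refine not_exists.symm.trans <| not_congr
          ⟨fun ⟨n, f, hf⟩ => ⟨n + 1, f, Nat.le_add_left 1 n, hf⟩,
            fun ⟨K, f, hK, hf⟩ => ?_⟩
        obtain ⟨n, rfl⟩ := Nat.exists_eq_add_of_le' hK
        exact ⟨n, f, hf⟩

end Real

end Matrix

theorem stmt_4 (d : ℕ) (W : Matrix (Fin d) (Fin d) ℝ) :
    0 ≤ (NormedSpace.exp (W ⊙ W)).trace - (d : ℝ) ∧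
    ((NormedSpace.exp (W ⊙ W)).trace - (d : ℝ) = 0 ↔
      ¬ ∃ (K : ℕ) (f : ℕ → Fin d), 1 ≤ K ∧ f K = f 0 ∧
        ∀ k < K, W (f k) (f (k + 1)) ≠ 0) := by
  have hA : ∀ i j, 0 ≤ (W ⊙ W) i j := fun i j => mul_self_nonneg (W i j)
  have hzero : ∀ i j, (W ⊙ W) i j ≠ 0 ↔ W i j ≠ 0 := fun i j => mul_self_ne_zero
  have hcard : (d : ℝ) = Fintype.card (Fin d) := by simp
  rw [hcard]
  exact ⟨trace_exp_sub_card_nonneg hA,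
    by simpa only [hzero] using trace_exp_sub_card_eq_zero_iff hA⟩
end

section
/- For $d \geq 2$, let $\mathcal{W}_0 = \{W \in \mathbb{R}^{d\times d} : h(W) = 0\}$; then every real $d \times d$ matrix with zero diagonal is a convex combination of elements of $\mathcal{W}_0 \cap \{W : \mathrm{diag}(W)=0\}$. -/
open Matrix

lemma exp_sq_zero {A : Type*} [Ring A] [Algebra ℝ A] [TopologicalSpace A]
    [IsTopologicalRing A] [T2Space A]
    (N : A) (h : N * N = 0) : NormedSpace.exp N = 1 + N := by
  simp only [NormedSpace.exp_eq_tsum ℝ]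
  rw [tsum_eq_sum (s := Finset.range 2)]
  · simp [Finset.sum_range_succ]
  · intro n hn
    simp only [Finset.mem_range, not_lt] at hn
    have : N ^ n = 0 := by
      have : N ^ n = N * N * N ^ (n - 2) := by
        rw [← pow_two, ← pow_add]
        congr 1; omega
      rw [this, h, zero_mul]
    simp [this]

theorem stmt_7 (d : ℕ) (hd : 2 ≤ d) (W : Matrix (Fin d) (Fin d) ℝ)
    (hdiag : ∀ i, W i i = 0) :
    ∃ (n : ℕ) (c : Fin n → ℝ) (M : Fin n → Matrix (Fin d) (Fin d) ℝ),
      (∀ k, 0 ≤ c k) ∧ (∑ k, c k = 1) ∧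
      (∀ k, (NormedSpace.exp (M k ⊙ M k)).trace - (d : ℝ) = 0 ∧ ∀ i, M k i i = 0) ∧
      W = ∑ k, c k • M k := by
  set e := finProdFinEquiv.symm with he
  refine ⟨d * d, fun _ => ((d*d : ℕ) : ℝ)⁻¹,
    fun k => Matrix.single (e k).1 (e k).2 ((d*d : ℕ) * W (e k).1 (e k).2), ?_, ?_, ?_, ?_⟩
  · intro k; positivity
  · have hdd : ((d*d : ℕ) : ℝ) ≠ 0 := by
      have : 0 < d := by omega
      positivity
    simp [Finset.sum_const]
    field_simp
  · intro k
    set i := (e k).1; set j := (e k).2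
    set b : ℝ := (d*d : ℕ) * W i j with hb
    have hH : Matrix.single i j b ⊙ Matrix.single i j b = Matrix.single i j (b * b) := by
      ext i' j'
      simp [Matrix.hadamard, Matrix.single]
      aesop
    have hdiag' : ∀ i', Matrix.single i j b i' i' = 0 := by
      intro i'
      by_cases hij : i = j
      · have : W i j = 0 := by rw [← hij]; exact hdiag i
        simp [hb, this, Matrix.single]
      · simp [Matrix.single]
        intro h1 h2
        exact absurd (h1.trans h2.symm) hij
    have hsq : Matrix.single i j (b*b) * Matrix.single i j (b*b) = 0 := by
      by_cases hij : i = j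
      · have : W i j = 0 := by rw [← hij]; exact hdiag i
        simp [hb, this]
      · exact Matrix.single_mul_single_of_ne (c := b*b) (i := i) (j := j) (k := i) (fun (h : j = i) => hij h.symm) (b*b)
    refine ⟨?_, hdiag'⟩
    rw [hH, exp_sq_zero _ hsq]
    have htr : (Matrix.single i j (b*b)).trace = 0 := by
      by_cases hij : i = j
      · have : W i j = 0 := by rw [← hij]; exact hdiag i
        simp [hb, this]
      · simp only [Matrix.trace, Matrix.diag, Matrix.single, of_apply]
        exact Finset.sum_eq_zero fun x _ => if_neg (fun h => hij (h.1.trans h.2.symm))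
    simp [htr, Matrix.trace_one]
  · have hdd : ((d*d : ℕ) : ℝ) ≠ 0 := by
      have : 0 < d := by omega
      positivity
    have h1 : ∀ k : Fin (d*d), ((d*d : ℕ) : ℝ)⁻¹ • Matrix.single (e k).1 (e k).2 ((d*d : ℕ) * W (e k).1 (e k).2)
        = Matrix.single (e k).1 (e k).2 (W (e k).1 (e k).2) := by
      intro k
      rw [smul_single]
      congr 1
      rw [smul_eq_mul]
      field_simp
    rw [Finset.sum_congr rfl (fun k _ => h1 k)]
    rw [Equiv.sum_comp e (fun p => Matrix.single p.1 p.2 (W p.1 p.2))]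
    rw [Fintype.sum_prod_type]
    exact matrix_eq_sum_single W
end

section
/- Let $W$ be a real $d\times d$ matrix and $h(W) = \mathrm{tr}(\exp(W\odot W)) - d$. Then $h(W) = 0$ if and only if $\nabla h(W) = 0$, where $\nabla h(W) = 2 W \odot (\exp(W\odot W))^\top$. -/
/-!
Write `A = W ⊙ W`, an entrywise nonnegative matrix with the same support as `W`. Since
`exp A = ∑ₖ Aᵏ / k!` has nonnegative terms, an entry of `exp A` vanishes iff that entry vanishes
in every power, and `(exp A)ᵢᵢ ≥ 1` with equality iff `(Aᵏ⁺¹)ᵢᵢ = 0` for all `k`. Hence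
`tr (exp A) = d` iff `A` has no closed walks. Expanding `(Aᵏ⁺¹)ᵢᵢ = ∑ⱼ Aᵢⱼ (Aᵏ)ⱼᵢ`, the absence of
closed walks means exactly that `Aᵢⱼ (exp A)ⱼᵢ = 0` for all `i, j`, i.e. `W ⊙ (exp A)ᵀ = 0`.
-/

open Matrix

theorem Summable.tsum_eq_zero_iff_of_nonneg {ι α : Type*} [AddCommMonoid α] [PartialOrder α]
    [IsOrderedAddMonoid α] [TopologicalSpace α] [OrderClosedTopology α] [T2Space α]
    {f : ι → α} (hf : Summable f) (h : ∀ i, 0 ≤ f i) :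
    ∑' i, f i = 0 ↔ ∀ i, f i = 0 := by
  rw [← hf.hasSum_iff, hasSum_zero_iff_of_nonneg h, funext_iff]
  rfl

namespace Matrix

theorem hadamard_self_hadamard_eq_zero_iff {m n R : Type*} [MulZeroClass R] [NoZeroDivisors R]
    (W M : Matrix m n R) : (W ⊙ W) ⊙ M = 0 ↔ W ⊙ M = 0 := by
  simp only [← ext_iff, hadamard_apply, zero_apply, mul_eq_zero, or_self]

variable {n : Type*} [Fintype n] [DecidableEq n]

theorem hasSum_exp_apply (A : Matrix n n ℝ) (i j : n) :
    HasSum (fun k => (k.factorial⁻¹ : ℝ) * (A ^ k) i j) (NormedSpace.exp A i j) := by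
  -- any submultiplicative norm makes the series converge; its topology is the entrywise one
  let : SeminormedRing (Matrix n n ℝ) := Matrix.linftyOpSemiNormedRing
  let : NormedRing (Matrix n n ℝ) := Matrix.linftyOpNormedRing
  let : NormedAlgebra ℝ (Matrix n n ℝ) := Matrix.linftyOpNormedAlgebra
  exact Pi.hasSum.1 (Pi.hasSum.1 (NormedSpace.exp_series_hasSum_exp' (𝕂 := ℝ) A) i) j

theorem hasSum_exp_apply_self_sub_one (A : Matrix n n ℝ) (i : n) :
    HasSum (fun k => ((k + 1).factorial⁻¹ : ℝ) * (A ^ (k + 1)) i i)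
      (NormedSpace.exp A i i - 1) := by
  simpa using (hasSum_nat_add_iff' 1).2 (hasSum_exp_apply A i i)

variable {A : Matrix n n ℝ}

theorem exp_apply_eq_zero_iff (hA : ∀ i j, 0 ≤ A i j) (i j : n) :
    NormedSpace.exp A i j = 0 ↔ ∀ k, (A ^ k) i j = 0 := by
  have hterm (k : ℕ) : 0 ≤ (k.factorial⁻¹ : ℝ) * (A ^ k) i j :=
    mul_nonneg (by positivity) (pow_apply_nonneg hA k i j)
  rw [← (hasSum_exp_apply A i j).tsum_eq,
    (hasSum_exp_apply A i j).summable.tsum_eq_zero_iff_of_nonneg hterm]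
  simp only [mul_eq_zero, inv_eq_zero, Nat.cast_eq_zero, Nat.factorial_ne_zero, false_or]

theorem exp_apply_self_eq_one_iff (hA : ∀ i j, 0 ≤ A i j) (i : n) :
    NormedSpace.exp A i i = 1 ↔ ∀ k, (A ^ (k + 1)) i i = 0 := by
  have hterm (k : ℕ) : 0 ≤ ((k + 1).factorial⁻¹ : ℝ) * (A ^ (k + 1)) i i :=
    mul_nonneg (by positivity) (pow_apply_nonneg hA _ i i)
  rw [← sub_eq_zero, ← (hasSum_exp_apply_self_sub_one A i).tsum_eq,
    (hasSum_exp_apply_self_sub_one A i).summable.tsum_eq_zero_iff_of_nonneg hterm]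
  simp only [mul_eq_zero, inv_eq_zero, Nat.cast_eq_zero, Nat.factorial_ne_zero, false_or]

theorem one_le_exp_apply_self (hA : ∀ i j, 0 ≤ A i j) (i : n) : 1 ≤ NormedSpace.exp A i i :=
  sub_nonneg.1 <| (hasSum_exp_apply_self_sub_one A i).nonneg fun k =>
    mul_nonneg (by positivity) (pow_apply_nonneg hA _ i i)

theorem trace_exp_eq_card_iff (hA : ∀ i j, 0 ≤ A i j) :
    (NormedSpace.exp A).trace = Fintype.card n ↔ ∀ i k, (A ^ (k + 1)) i i = 0 := by
  have hdiag : (NormedSpace.exp A).trace - Fintype.card n = ∑ i, (NormedSpace.exp A i i - 1) := by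
    simp [trace, Finset.sum_sub_distrib]
  rw [← sub_eq_zero, hdiag, Finset.sum_eq_zero_iff_of_nonneg fun i _ =>
    sub_nonneg.2 (one_le_exp_apply_self hA i)]
  simp only [Finset.mem_univ, true_implies, sub_eq_zero, exp_apply_self_eq_one_iff hA]

theorem hadamard_transpose_exp_eq_zero_iff (hA : ∀ i j, 0 ≤ A i j) :
    A ⊙ (NormedSpace.exp A)ᵀ = 0 ↔ ∀ i k, (A ^ (k + 1)) i i = 0 := by
  have hcycle (i : n) (k : ℕ) :
      (A ^ (k + 1)) i i = 0 ↔ ∀ j, A i j * (A ^ k) j i = 0 := by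
    rw [pow_succ', mul_apply, Finset.sum_eq_zero_iff_of_nonneg fun j _ =>
      mul_nonneg (hA i j) (pow_apply_nonneg hA k j i)]
    simp only [Finset.mem_univ, true_implies]
  simp only [← ext_iff, hadamard_apply, transpose_apply, zero_apply, mul_eq_zero,
    exp_apply_eq_zero_iff hA, hcycle, ← forall_or_left]
  exact forall_congr' fun _ => forall_comm

end Matrix

theorem stmt_9 (d : ℕ) (W : Matrix (Fin d) (Fin d) ℝ) :
    (NormedSpace.exp (W ⊙ W)).trace - (d : ℝ) = 0 ↔
      (2 : ℝ) • (W ⊙ (NormedSpace.exp (W ⊙ W))ᵀ) = 0 := by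
  have hA : ∀ i j, 0 ≤ (W ⊙ W) i j := fun i j => mul_self_nonneg (W i j)
  rw [sub_eq_zero, smul_eq_zero, or_iff_right two_ne_zero,
    ← hadamard_self_hadamard_eq_zero_iff, hadamard_transpose_exp_eq_zero_iff hA,
    ← trace_exp_eq_card_iff hA, Fintype.card_fin]
end

section
/- If $W$ is a real $d \times d$ matrix that is permutation-similar to a strictly upper triangular matrix, then $W \odot (\exp(W \odot W))^\top = 0$. -/
open Matrix

namespace Matrix

variable {m α R : Type*} {A B : Matrix m m R}

theorem blockTriangular_of_forall_not_lt [Zero R] [Preorder α] {b : m → α}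
    (hA : ∀ i j, ¬ b i < b j → A i j = 0) : A.BlockTriangular b :=
  fun i j hji => hA i j (lt_asymm hji)

variable [MulZeroClass R] [LT α] {b : m → α}

theorem BlockTriangular.hadamard (hA : A.BlockTriangular b) : (A ⊙ B).BlockTriangular b :=
  fun i j hji => by simp [hA hji]

theorem hadamard_transpose_eq_zero_of_blockTriangular
    (hA : ∀ i j, ¬ b i < b j → A i j = 0) (hB : B.BlockTriangular b) : A ⊙ Bᵀ = 0 := by
  ext i j
  by_cases hij : b i < b j
  · simp [hB hij]
  · simp [hA i j hij]

end Matrix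

theorem stmt_11 (d : ℕ) (W : Matrix (Fin d) (Fin d) ℝ)
    (hperm : ∃ σ : Equiv.Perm (Fin d), ∀ i j, ¬ σ i < σ j → W i j = 0) :
    W ⊙ (NormedSpace.exp (W ⊙ W))ᵀ = 0 := by
  obtain ⟨σ, hσ⟩ := hperm
  have hexp : (NormedSpace.exp (W ⊙ W)).BlockTriangular σ :=
    (blockTriangular_of_forall_not_lt hσ).hadamard.exp
  exact hadamard_transpose_eq_zero_of_blockTriangular hσ hexp
end

section
/- For a real $d\times d$ matrix $W$ whose directed graph is acyclic, $\mathrm{tr}((W \odot W)^k) = 0$ for all $k \geq 1$, and hence $h(W) = \mathrm{tr}(\exp(W\odot W)) - d = 0$. -/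
open Matrix

namespace Matrix

variable {ι R : Type*}

/-- A closed walk of positive length in the directed graph with an edge `i → j` iff `A i j ≠ 0`. -/
def HasCycle [Zero R] (A : Matrix ι ι R) : Prop :=
  ∃ (K : ℕ) (f : ℕ → ι), 1 ≤ K ∧ f K = f 0 ∧ ∀ k < K, A (f k) (f (k + 1)) ≠ 0

theorem HasCycle.mono {S : Type*} [Zero R] [Zero S] {A : Matrix ι ι R} {B : Matrix ι ι S}
    (hA : A.HasCycle) (hAB : ∀ i j, A i j ≠ 0 → B i j ≠ 0) : B.HasCycle := by
  obtain ⟨K, f, hK, hf, hedge⟩ := hA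
  exact ⟨K, f, hK, hf, fun k hk => hAB _ _ (hedge k hk)⟩

variable [Fintype ι] [DecidableEq ι]

theorem exists_walk_of_pow_apply_ne_zero [Semiring R] (A : Matrix ι ι R) {k : ℕ} {i j : ι}
    (h : (A ^ k) i j ≠ 0) :
    ∃ f : ℕ → ι, f 0 = i ∧ f k = j ∧ ∀ m < k, A (f m) (f (m + 1)) ≠ 0 := by
  induction k generalizing j with
  | zero =>
    obtain rfl : i = j := by
      by_contra hij
      simp [one_apply_ne hij] at h
    exact ⟨fun _ => i, rfl, rfl, fun m hm => absurd hm m.not_lt_zero⟩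
  | succ k ih =>
    rw [pow_succ, mul_apply] at h
    obtain ⟨l, -, hl⟩ := Finset.exists_ne_zero_of_sum_ne_zero h
    obtain ⟨f, hf0, hfk, hedge⟩ := ih (left_ne_zero_of_mul hl)
    refine ⟨Function.update f (k + 1) j, by simp [hf0], by simp, fun m hm => ?_⟩
    rcases Nat.lt_succ_iff_lt_or_eq.mp hm with hm | rfl
    · rw [Function.update_of_ne (by omega), Function.update_of_ne (by omega)]
      exact hedge m hm
    · rw [Function.update_of_ne (by omega), Function.update_self, hfk]
      exact right_ne_zero_of_mul hl

theorem trace_pow_eq_zero_of_not_hasCycle [Semiring R] {A : Matrix ι ι R} (hA : ¬ A.HasCycle)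
    {k : ℕ} (hk : 1 ≤ k) : (A ^ k).trace = 0 := by
  refine Finset.sum_eq_zero fun i _ => ?_
  by_contra h
  obtain ⟨f, hf0, hfk, hedge⟩ := A.exists_walk_of_pow_apply_ne_zero h
  exact hA ⟨k, f, hk, hfk.trans hf0.symm, hedge⟩

open scoped Norms.Operator in
/-- Apply the trace to the exponential series: only the `n = 0` term survives. -/
theorem trace_exp_eq_card_of_trace_pow_eq_zero {𝕂 : Type*} [RCLike 𝕂] {A : Matrix ι ι 𝕂}
    (hA : ∀ k, 1 ≤ k → (A ^ k).trace = 0) : (NormedSpace.exp A).trace = Fintype.card ι := by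
  have hseries := (NormedSpace.exp_series_hasSum_exp' (𝕂 := 𝕂) A).map
    (traceLinearMap ι 𝕂 𝕂) continuous_id.matrix_trace
  have hterms : (traceLinearMap ι 𝕂 𝕂 ∘ fun n => (n.factorial⁻¹ : 𝕂) • A ^ n) =
      fun n => if n = 0 then (Fintype.card ι : 𝕂) else 0 := by
    funext n
    rcases n.eq_zero_or_pos with rfl | hn
    · simp
    · simp [hA n hn, hn.ne']
  rw [hterms] at hseries
  exact hseries.unique (hasSum_ite_eq 0 _)

end Matrix

theorem stmt_12 (d : ℕ) (W : Matrix (Fin d) (Fin d) ℝ)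
    (hacyc : ¬ ∃ (K : ℕ) (f : ℕ → Fin d), 1 ≤ K ∧ f K = f 0 ∧
      ∀ k < K, W (f k) (f (k + 1)) ≠ 0) :
    (∀ k : ℕ, 1 ≤ k → ((W ⊙ W) ^ k).trace = 0) ∧
      (NormedSpace.exp (W ⊙ W)).trace - (d : ℝ) = 0 := by
  have hWW : ¬ (W ⊙ W).HasCycle := fun h => hacyc (h.mono fun _ _ => left_ne_zero_of_mul)
  have htrace := fun k (hk : 1 ≤ k) => trace_pow_eq_zero_of_not_hasCycle hWW hk
  exact ⟨htrace, by rw [trace_exp_eq_card_of_trace_pow_eq_zero htrace, Fintype.card_fin, sub_self]⟩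
end

section
/- Let $W$ be a real $d\times d$ matrix with $d \geq 2$, $Z$ the diagonal matrix with $Z_{11}=0$ and $Z_{ii}=1$ for $i>1$, and suppose $I - ZW^\top$ is invertible. Let $\tilde\varepsilon$ be a random vector with zero mean and diagonal covariance $\tilde\Sigma$ with $\tilde\Sigma_{11} > 0$, and define $v = (I - ZW^\top)^{-1}\tilde\varepsilon$. Then $\mathrm{Cov}(v_1, v_2)/\mathrm{Var}(v_1) = [(I - ZW^\top)^{-1}]_{21}$. -/
/-! Row 0 of `1 - Z * Wᵀ` is the basis vector `e₀`, hence so is row 0 of its inverse `M`; thus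
`v₀ = ε₀` and `v₁ = M 1 ⬝ᵥ ε`. Since the components of `ε` are uncorrelated, `E[ε₀ (M 1 ⬝ᵥ ε)]`
keeps only the term `M 1 0 · E[ε₀²]`, and both means vanish. -/

open Matrix MeasureTheory

namespace Matrix

variable {ι R : Type*} [Fintype ι] [DecidableEq ι]

lemma inv_row_eq_single_of_row_eq_single [CommRing R] {A : Matrix ι ι R} (hA : IsUnit A)
    {i : ι} (hrow : A i = Pi.single i 1) : A⁻¹ i = Pi.single i 1 := by
  have hAA : A * A⁻¹ = 1 := mul_nonsing_inv A ((isUnit_iff_isUnit_det A).mp hA)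
  calc A⁻¹ i = (A * A⁻¹) i := by rw [mul_apply_eq_vecMul, hrow, single_one_vecMul]; rfl
    _ = Pi.single i 1 := by rw [hAA]; ext j; exact one_eq_pi_single

lemma one_sub_diagonal_mul_row_eq_single [Ring R] {z : ι → R} {i : ι} (hz : z i = 0)
    (B : Matrix ι ι R) : (1 - diagonal z * B) i = Pi.single i 1 := by
  ext j
  rw [sub_apply, diagonal_mul, hz, zero_mul, sub_zero, one_eq_pi_single]

end Matrix

section Uncorrelated

variable {Ω ι : Type*} [Fintype ι] [MeasurableSpace Ω] {μ : Measure Ω} {ε : Ω → ι → ℝ}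

lemma integral_mul_dotProduct_of_uncorrelated
    (hint : ∀ j k, Integrable (fun ω => ε ω j * ε ω k) μ)
    (huncorr : ∀ j k, j ≠ k → ∫ ω, ε ω j * ε ω k ∂μ = 0) (i : ι) (m : ι → ℝ) :
    ∫ ω, ε ω i * (m ⬝ᵥ ε ω) ∂μ = m i * ∫ ω, ε ω i * ε ω i ∂μ := by
  have hsum : (fun ω => ε ω i * (m ⬝ᵥ ε ω)) = fun ω => ∑ j, m j * (ε ω i * ε ω j) := by
    funext ω
    simp only [dotProduct, Finset.mul_sum, mul_left_comm]
  rw [hsum, integral_finsetSum _ fun j _ => (hint i j).const_mul _,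
    Finset.sum_eq_single_of_mem i (Finset.mem_univ i), integral_const_mul]
  intro j _ hji
  rw [integral_const_mul, huncorr i j hji.symm, mul_zero]

end Uncorrelated

theorem stmt_17_general (d : ℕ) (W Z : Matrix (Fin (d + 2)) (Fin (d + 2)) ℝ)
    (hZ : Z = Matrix.diagonal (fun i => if i = 0 then (0 : ℝ) else 1))
    (hinv : IsUnit (1 - Z * Wᵀ))
    {Ω : Type*} [MeasurableSpace Ω] (μ : Measure Ω)
    (eps : Ω → Fin (d + 2) → ℝ)
    (hint : ∀ i j : Fin (d + 2), Integrable (fun ω => eps ω i * eps ω j) μ)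
    (hmean : ∀ i : Fin (d + 2), ∫ ω, eps ω i ∂μ = 0)
    (hdiag : ∀ i j : Fin (d + 2), i ≠ j → ∫ ω, eps ω i * eps ω j ∂μ = 0)
    (hvar : 0 < ∫ ω, eps ω 0 * eps ω 0 ∂μ)
    (v : Ω → Fin (d + 2) → ℝ)
    (hv : ∀ ω, v ω = (1 - Z * Wᵀ)⁻¹ *ᵥ eps ω) :
    ((∫ ω, v ω 0 * v ω 1 ∂μ) - (∫ ω, v ω 0 ∂μ) * ∫ ω, v ω 1 ∂μ) /
        ((∫ ω, v ω 0 * v ω 0 ∂μ) - (∫ ω, v ω 0 ∂μ) ^ 2) =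
      (1 - Z * Wᵀ)⁻¹ 1 0 := by
  set M := (1 - Z * Wᵀ)⁻¹
  have hM0 : M 0 = Pi.single 0 1 := inv_row_eq_single_of_row_eq_single hinv
    (by rw [hZ]; exact one_sub_diagonal_mul_row_eq_single (by simp) _)
  have hv0 : ∀ ω, v ω 0 = eps ω 0 := fun ω => by
    rw [hv ω, mulVec, hM0, single_one_dotProduct]
  have hv1 : ∀ ω, v ω 1 = M 1 ⬝ᵥ eps ω := fun ω => by rw [hv ω]; rfl
  simp only [hv0, hv1, hmean, integral_mul_dotProduct_of_uncorrelated hint hdiag, zero_mul,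
    sub_zero, zero_pow two_ne_zero]
  exact mul_div_cancel_right₀ _ hvar.ne'

theorem stmt_17 (d : ℕ) (W Z : Matrix (Fin (d + 2)) (Fin (d + 2)) ℝ)
    (hZ : Z = Matrix.diagonal (fun i => if i = 0 then (0 : ℝ) else 1))
    (hinv : IsUnit (1 - Z * Wᵀ))
    {Ω : Type*} [MeasurableSpace Ω] (μ : Measure Ω) [IsProbabilityMeasure μ]
    (eps : Ω → Fin (d + 2) → ℝ)
    (hint : ∀ i j : Fin (d + 2), Integrable (fun ω => eps ω i * eps ω j) μ)
    (hint1 : ∀ i : Fin (d + 2), Integrable (fun ω => eps ω i) μ)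
    (hmean : ∀ i : Fin (d + 2), ∫ ω, eps ω i ∂μ = 0)
    (hdiag : ∀ i j : Fin (d + 2), i ≠ j → ∫ ω, eps ω i * eps ω j ∂μ = 0)
    (hvar : 0 < ∫ ω, eps ω 0 * eps ω 0 ∂μ)
    (v : Ω → Fin (d + 2) → ℝ)
    (hv : ∀ ω, v ω = (1 - Z * Wᵀ)⁻¹ *ᵥ eps ω) :
    ((∫ ω, v ω 0 * v ω 1 ∂μ) - (∫ ω, v ω 0 ∂μ) * ∫ ω, v ω 1 ∂μ) /
        ((∫ ω, v ω 0 * v ω 0 ∂μ) - (∫ ω, v ω 0 ∂μ) ^ 2) =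
      (1 - Z * Wᵀ)⁻¹ 1 0 :=
  stmt_17_general d W Z hZ hinv μ eps hint hmean hdiag hvar v hv
end
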